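/- arXiv:2602.20832 — 3 statements merged into one kernel-verified Lean document; each statement's English description precedes it below -/
import Mathlib

section
/- Let F be a field of characteristic p, and let g_1, ..., g_n ∈ F[x] be polynomials each of degree at most d. If p = 0 or p > d, then g_1, ..., g_n are linearly dependent over F if and only if their Wronskian W(g_1, ..., g_n) is identically zero. -/
/-!
If `∑ a j • g j = 0` nontrivially, then `(C (a j))_j` is a nonzero kernel vector of the Wronskian
matrix. Conversely, the Wronskian is unchanged by the column operation `g j ↦ g j - c • g k`,
which preserves linear independence, so Gaussian elimination on leading coefficients reduces a
linearly independent family to one whose degrees `k j ≤ d` are pairwise distinct. For such a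
family the coefficient of `X ^ (∑ k j - ∑ j)` in the Wronskian is
`det (descFactorial (k j) i) * ∏ leadingCoeff (g j)`, and that determinant is the Vandermonde
determinant of the `(k j : F)`, which are pairwise distinct when `p = 0` or `p > d`.
-/

open Polynomial Finset

theorem LinearIndependent.update_sub_smul {ι R M : Type*} [DecidableEq ι] [CommRing R]
    [AddCommGroup M] [Module R M] {v : ι → M} (hv : LinearIndependent R v) {j k : ι}
    (hjk : j ≠ k) (c : R) : LinearIndependent R (Function.update v j (v j - c • v k)) :=
  hv.update j _ ⟨1, one_mem _, Finsupp.single j 1 - Finsupp.single k c,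
    by simp [Finsupp.single_eq_of_ne hjk],
    by simp [Finsupp.linearCombination_single]⟩

theorem natCast_injOn_Iic_of_ringChar {R : Type*} [NonAssocRing R] {d : ℕ}
    (hp : ringChar R = 0 ∨ d < ringChar R) : Set.InjOn (Nat.cast : ℕ → R) (Set.Iic d) := by
  rcases hp with h0 | hlt
  · have : CharP R 0 := h0 ▸ ringChar.charP R
    have : CharZero R := CharP.charP_to_charZero R
    exact Nat.cast_injective.injOn
  · exact (CharP.natCast_injOn_Iio R (ringChar R)).mono fun m hm => lt_of_le_of_lt hm hlt

namespace Polynomial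

theorem coeff_prod_sum_of_natDegree_le {S ι : Type*} [CommSemiring S] (s : Finset ι)
    (f : ι → S[X]) (e : ι → ℕ) (h : ∀ i ∈ s, (f i).natDegree ≤ e i) :
    (∏ i ∈ s, f i).coeff (∑ i ∈ s, e i) = ∏ i ∈ s, (f i).coeff (e i) := by
  induction s using Finset.cons_induction with
  | empty => simp
  | cons a s _ ih =>
    have hs : ∀ i ∈ s, (f i).natDegree ≤ e i := fun i hi => h i (mem_cons_of_mem hi)
    rw [prod_cons, sum_cons, coeff_mul_add_eq_of_natDegree_le (h a (mem_cons_self a s))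
      ((natDegree_prod_le s f).trans (sum_le_sum hs)), ih hs, prod_cons]

theorem natDegree_sub_smul_lt {F : Type*} [Field F] {p q : F[X]} (hq : q ≠ 0)
    (hpq : p.natDegree = q.natDegree) (h : p - (p.leadingCoeff / q.leadingCoeff) • q ≠ 0) :
    (p - (p.leadingCoeff / q.leadingCoeff) • q).natDegree < p.natDegree := by
  have hp : p ≠ 0 := by rintro rfl; simp at h
  have hlq : q.leadingCoeff ≠ 0 := leadingCoeff_ne_zero.mpr hq
  have hc : p.leadingCoeff / q.leadingCoeff ≠ 0 := div_ne_zero (leadingCoeff_ne_zero.mpr hp) hlq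
  refine natDegree_lt_natDegree h (degree_sub_lt_left ?_ hp ?_)
  · rw [smul_eq_C_mul, degree_C_mul hc, degree_eq_natDegree hp, degree_eq_natDegree hq, hpq]
  · rw [smul_eq_C_mul, leadingCoeff_mul, leadingCoeff_C, div_mul_cancel₀ _ hlq]

variable {R : Type*} [CommRing R] {n : ℕ}

noncomputable def wronskianMatrix (g : Fin n → R[X]) : Matrix (Fin n) (Fin n) R[X] :=
  Matrix.of fun i j => derivative^[(i : ℕ)] (g j)

theorem det_wronskianMatrix_eq_zero_of_not_linearIndependent [IsDomain R] {g : Fin n → R[X]}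
    (h : ¬ LinearIndependent R g) : (wronskianMatrix g).det = 0 := by
  obtain ⟨a, hsum, j, hj⟩ := Fintype.not_linearIndependent_iff.mp h
  refine Matrix.exists_mulVec_eq_zero_iff.mp ⟨fun j => C (a j), fun h => hj ?_, ?_⟩
  · simpa using congrFun h j
  · funext i
    have hcol : ∀ j, derivative^[(i : ℕ)] (g j) * C (a j) = derivative^[(i : ℕ)] (a j • g j) :=
      fun j => by rw [iterate_derivative_smul, smul_eq_C_mul, mul_comm]
    simp only [Matrix.mulVec, dotProduct, wronskianMatrix, Matrix.of_apply, hcol,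
      ← iterate_derivative_sum, hsum, iterate_derivative_zero, Pi.zero_apply]

theorem det_wronskianMatrix_update_sub_smul (g : Fin n → R[X]) {j k : Fin n} (hjk : j ≠ k)
    (c : R) : (wronskianMatrix (Function.update g j (g j - c • g k))).det =
      (wronskianMatrix g).det := by
  have hcol : wronskianMatrix (Function.update g j (g j - c • g k)) =
      (wronskianMatrix g).updateCol j
        fun i => wronskianMatrix g i j + (-C c) • wronskianMatrix g i k := by
    ext i x : 1
    rcases eq_or_ne x j with rfl | hx
    · simp [wronskianMatrix, smul_eq_C_mul, sub_eq_add_neg]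
    · simp [wronskianMatrix, Matrix.updateCol_ne hx, Function.update_of_ne hx]
  rw [hcol, Matrix.det_updateCol_add_smul_self _ hjk]

/-- Only permutations with `σ j ≤ natDegree (g j)` for all `j` contribute, and each of them
contributes exactly at this degree. -/
theorem coeff_det_wronskianMatrix (g : Fin n → R[X]) :
    (wronskianMatrix g).det.coeff (∑ j, (g j).natDegree - ∑ j : Fin n, (j : ℕ)) =
      (Matrix.of fun i j : Fin n => ((g j).natDegree.descFactorial i : R)).det *
        ∏ j, (g j).leadingCoeff := by
  set k : Fin n → ℕ := fun j => (g j).natDegree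
  have hterm : ∀ σ : Equiv.Perm (Fin n),
      (∏ j, derivative^[(σ j : ℕ)] (g j)).coeff (∑ j, k j - ∑ j : Fin n, (j : ℕ)) =
        (∏ j, ((k j).descFactorial (σ j) : R)) * ∏ j, (g j).leadingCoeff := by
    intro σ
    by_cases hσ : ∀ j, (σ j : ℕ) ≤ k j
    · have hdeg : ∑ j, k j - ∑ j : Fin n, (j : ℕ) = ∑ j, (k j - σ j) := by
        rw [sum_tsub_distrib _ fun j _ => hσ j, Equiv.sum_comp σ fun j : Fin n => (j : ℕ)]
      rw [hdeg, coeff_prod_sum_of_natDegree_le _ _ _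
        fun j _ => natDegree_iterate_derivative (g j) _, ← prod_mul_distrib]
      refine prod_congr rfl fun j _ => ?_
      rw [coeff_iterate_derivative, Nat.sub_add_cancel (hσ j), nsmul_eq_mul]
      rfl
    · simp only [not_forall, not_le] at hσ
      obtain ⟨j, hj⟩ := hσ
      rw [prod_eq_zero (mem_univ j) (iterate_derivative_eq_zero hj),
        prod_eq_zero (mem_univ j) (by rw [Nat.descFactorial_eq_zero_iff_lt.mpr hj, Nat.cast_zero]),
        coeff_zero, zero_mul]
  rw [Matrix.det_apply, finsetSum_coeff, Matrix.det_apply, sum_mul]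
  refine sum_congr rfl fun σ _ => ?_
  simp only [wronskianMatrix, Matrix.of_apply]
  rw [coeff_smul, smul_mul_assoc, hterm σ]

theorem det_descFactorial_eq_det_vandermonde [IsDomain R] (k : Fin n → ℕ) :
    (Matrix.of fun i j : Fin n => ((k j).descFactorial i : R)).det =
      (Matrix.vandermonde fun j => (k j : R)).det := by
  rw [Matrix.det_eval_matrixOfPolynomials_eq_det_vandermonde _
    (fun i : Fin n => descPochhammer R i) (fun i => descPochhammer_natDegree R i)
    (fun i => monic_descPochhammer R i), ← Matrix.det_transpose]
  congr 1
  ext i j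
  simp [descPochhammer_eval_eq_descFactorial]

theorem det_wronskianMatrix_ne_zero_of_injective [IsDomain R] {g : Fin n → R[X]}
    (hg : ∀ j, g j ≠ 0) (hinj : Function.Injective fun j => ((g j).natDegree : R)) :
    (wronskianMatrix g).det ≠ 0 := by
  intro h
  have hcoeff := coeff_det_wronskianMatrix g
  rw [h, coeff_zero, det_descFactorial_eq_det_vandermonde, eq_comm] at hcoeff
  exact mul_ne_zero (Matrix.det_vandermonde_ne_zero_iff.mpr hinj)
    (prod_ne_zero_iff.mpr fun j _ => leadingCoeff_ne_zero.mpr (hg j)) hcoeff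

theorem det_wronskianMatrix_ne_zero_of_linearIndependent {F : Type*} [Field F] {d : ℕ}
    (hcast : Set.InjOn (Nat.cast : ℕ → F) (Set.Iic d)) (g : Fin n → F[X])
    (hdeg : ∀ j, (g j).natDegree ≤ d) (hg : LinearIndependent F g) :
    (wronskianMatrix g).det ≠ 0 := by
  induction hN : ∑ j, (g j).natDegree using Nat.strong_induction_on generalizing g with
  | _ N ih =>
  by_cases hinj : Function.Injective fun j => ((g j).natDegree : F)
  · exact det_wronskianMatrix_ne_zero_of_injective hg.ne_zero hinj
  obtain ⟨j, k, hjk, hne⟩ : ∃ j k, (g j).natDegree = (g k).natDegree ∧ j ≠ k := by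
    simp only [Function.Injective, not_forall] at hinj
    obtain ⟨j, k, h, hne⟩ := hinj
    exact ⟨j, k, hcast (hdeg j) (hdeg k) h, hne⟩
  set c := (g j).leadingCoeff / (g k).leadingCoeff
  set g' := Function.update g j (g j - c • g k)
  have hg' : LinearIndependent F g' := hg.update_sub_smul hne c
  have hlt : (g' j).natDegree < (g j).natDegree := by
    have := natDegree_sub_smul_lt (hg.ne_zero k) hjk (by simpa [g'] using hg'.ne_zero j)
    simpa [g'] using this
  have hle : ∀ x, (g' x).natDegree ≤ (g x).natDegree := by
    intro x
    rcases eq_or_ne x j with rfl | hx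
    · exact hlt.le
    · simp [g', Function.update_of_ne hx]
  rw [← det_wronskianMatrix_update_sub_smul g hne c]
  exact ih _ (hN ▸ sum_lt_sum (fun x _ => hle x) ⟨j, mem_univ j, hlt⟩) g'
    (fun x => (hle x).trans (hdeg x)) hg' rfl

end Polynomial

/-- Over a field of characteristic `0` or `p > d`, polynomials of degree at most `d`
are linearly dependent iff their Wronskian vanishes identically. -/
theorem stmt1 (F : Type*) [Field F] (n d : ℕ) (g : Fin n → F[X])
    (hdeg : ∀ i, (g i).natDegree ≤ d)
    (hp : ringChar F = 0 ∨ d < ringChar F) :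
    ¬ LinearIndependent F g ↔
      Matrix.det (Matrix.of fun i j : Fin n =>
        (fun p : F[X] => derivative p)^[(i : ℕ)] (g j)) = 0 := by
  change ¬ LinearIndependent F g ↔ (wronskianMatrix g).det = 0
  exact ⟨det_wronskianMatrix_eq_zero_of_not_linearIndependent,
    fun h hg => det_wronskianMatrix_ne_zero_of_linearIndependent
      (natCast_injOn_Iic_of_ringChar hp) g hdeg hg h⟩
end

section
/- Let f_1, ..., f_r ∈ F[x] have degrees δ_i ≤ δ, let d ≥ r, and let W_k(x) be the (0-indexed) k-th cofactor in the Laplace expansion along the first column of the (r+1)×(r+1) Wronskian matrix of (f, f_1^d, ..., f_r^d), i.e., the determinant of the r×r minor obtained by deleting row k and the first column. Then W_k(x) = (∏_{i=1}^{r} f_i^{d-r}) · P̃_k(x) for some polynomial P̃_k of degree at most r²δ. -/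
/-!
Differentiating `f ^ e * g` gives `f ^ (e - 1) * (e f' g + f g')`, so each derivative
strips at most one factor of `f` and raises the degree of the cofactor by at most `deg f`. Hence
every entry of the minor is `f j ^ (d - r)` times a polynomial of degree `≤ r δ`; pulling the
column factors out of the determinant leaves a determinant of an `r × r` matrix of such
polynomials, whose degree is at most `r · rδ`.
-/

open Polynomial

theorem exists_iterate_derivative_pow_eq_pow_mul {R : Type*} [CommSemiring R] (f : R[X])
    {m d : ℕ} (hm : m ≤ d) :
    ∃ g : R[X], g.natDegree ≤ m * f.natDegree ∧ derivative^[m] (f ^ d) = f ^ (d - m) * g := by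
  induction m with
  | zero => exact ⟨1, by simp⟩
  | succ m ih =>
    obtain ⟨g, hg, hfg⟩ := ih (by omega)
    have hdm : d - m = d - (m + 1) + 1 := by omega
    refine ⟨C ((d - m : ℕ) : R) * derivative f * g + f * derivative g, ?_, ?_⟩
    · have hf' := (natDegree_derivative_le f).trans (Nat.sub_le _ 1)
      have hg' := (natDegree_derivative_le g).trans (Nat.sub_le _ 1)
      refine natDegree_add_le_of_degree_le ?_ ?_
      · refine natDegree_mul_le.trans ?_
        have := (natDegree_C_mul_le ((d - m : ℕ) : R) (derivative f)).trans hf'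
        linarith
      · refine natDegree_mul_le.trans ?_
        linarith
    · rw [Function.iterate_succ_apply', hfg, derivative_mul, derivative_pow, hdm,
        Nat.add_sub_cancel, pow_succ]
      ring

theorem exists_iterate_derivative_pow_eq_pow_mul_of_le {R : Type*} [CommSemiring R] (f : R[X])
    {m r d : ℕ} (hmr : m ≤ r) (hrd : r ≤ d) :
    ∃ g : R[X], g.natDegree ≤ r * f.natDegree ∧ derivative^[m] (f ^ d) = f ^ (d - r) * g := by
  obtain ⟨g, hg, hfg⟩ := exists_iterate_derivative_pow_eq_pow_mul f (hmr.trans hrd)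
  refine ⟨f ^ (r - m) * g, ?_, ?_⟩
  · calc (f ^ (r - m) * g).natDegree ≤ (r - m) * f.natDegree + m * f.natDegree :=
          natDegree_mul_le.trans (add_le_add natDegree_pow_le hg)
      _ = r * f.natDegree := by rw [← add_mul, Nat.sub_add_cancel hmr]
  · rw [hfg, ← mul_assoc, ← pow_add]
    congr 2
    omega

theorem natDegree_det_le_of_forall_natDegree_le {n R : Type*} [DecidableEq n] [Fintype n]
    [CommRing R] (M : Matrix n n R[X]) {b : ℕ} (h : ∀ i j, (M i j).natDegree ≤ b) :
    M.det.natDegree ≤ Fintype.card n * b := by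
  rw [Matrix.det_apply]
  refine natDegree_sum_le_of_forall_le _ _ fun σ _ => ?_
  calc (Equiv.Perm.sign σ • ∏ i, M (σ i) i).natDegree ≤ (∏ i, M (σ i) i).natDegree := by
        rcases Int.units_eq_one_or (Equiv.Perm.sign σ) with hσ | hσ
        · rw [hσ, one_smul]
        · rw [hσ, Units.neg_smul, one_smul, natDegree_neg]
    _ ≤ ∑ i, (M (σ i) i).natDegree := natDegree_prod_le _ _
    _ ≤ Fintype.card n * b :=
        (Finset.sum_le_card_nsmul _ _ b fun i _ => h (σ i) i).trans_eq (by simp)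

/-- Each cofactor `W_k` from the Laplace expansion along the first column of the
`(r+1)×(r+1)` Wronskian matrix of `(f, f_1^d, …, f_r^d)` factors as
`(∏_i f_i^{d-r}) · P̃_k` with `deg P̃_k ≤ r²δ`. -/
theorem stmt8 (F : Type*) [Field F] (r d δ : ℕ) (hd : r ≤ d)
    (f : Fin r → F[X]) (hdeg : ∀ i, (f i).natDegree ≤ δ)
    (k : Fin (r + 1)) :
    ∃ P : F[X], P.natDegree ≤ r ^ 2 * δ ∧
      Matrix.det (Matrix.of fun i j : Fin r =>
          (fun p : F[X] => derivative p)^[((k.succAbove i : Fin (r + 1)) : ℕ)]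
            (f j ^ d)) =
        (∏ i, f i ^ (d - r)) * P := by
  have hfactor (i j : Fin r) : ∃ g : F[X], g.natDegree ≤ r * δ ∧
      derivative^[(k.succAbove i : ℕ)] (f j ^ d) = f j ^ (d - r) * g :=
    (exists_iterate_derivative_pow_eq_pow_mul_of_le (f j) (Fin.is_le _) hd).imp
      fun _ hg => ⟨hg.1.trans (Nat.mul_le_mul_left r (hdeg j)), hg.2⟩
  choose g hg_deg hg_eq using hfactor
  refine ⟨(Matrix.of g).det, ?_, ?_⟩
  · calc (Matrix.of g).det.natDegree ≤ Fintype.card (Fin r) * (r * δ) :=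
          natDegree_det_le_of_forall_natDegree_le _ hg_deg
      _ = r ^ 2 * δ := by rw [Fintype.card_fin]; ring
  · rw [← Matrix.det_mul_row]
    exact congrArg Matrix.det (Matrix.ext hg_eq)
end

section
/- Let q be prime, k ∈ {1,...,q-1}, and λ ∈ F* an element of multiplicative order greater than δ. Define the modified Klivans–Spielman maps Ψ_{k,q}(x_i) = y^{(k^{i-1} mod q)} and Ψ_{j,k,q,λ}(x_i) = λ·y^{(k^{j-1} mod q)} if i = j, else y^{(k^{i-1} mod q)}. Suppose f = ∑_e c_e x^e is a polynomial of degree ≤ δ such that Ψ_{k,q} maps distinct monomials of f to distinct monomials of y (i.e., the exponent map e ↦ ∑_i e_i (k^{i-1} mod q) is injective on the support of f). Then f is uniquely determined by, and can be recovered from, the n+1 univariate polynomials Ψ_{k,q}(f) and Ψ_{j,k,q,λ}(f), j = 1, ..., n. -/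
/-!
Substituting `x_i ↦ c_i y^{w_i}` sends the monomial `x^e` to a scalar multiple of `y^{⟨e, w⟩}`, so
when `e ↦ ⟨e, w⟩` is injective on the support, the coefficient `f_e` can be read off the image at
`y^{⟨e, w⟩}`. With `c = 1` this gives `f_e`; with `c = λ` in position `j` it gives `f_e λ^{e_j}`.
As the exponents are at most `δ < ord λ`, the power `λ^{e_j}` determines `e_j`, so every monomial of
`f` (exponent and coefficient) is recovered from the `n + 1` images.
-/

open Polynomial

theorem pow_injOn_Iic_of_orderOf {G : Type*} [LeftCancelMonoid G] {x : G} {δ : ℕ}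
    (h : orderOf x = 0 ∨ δ < orderOf x) : (Set.Iic δ).InjOn (x ^ ·) := by
  rcases h with h | h
  · exact fun a _ b _ hab => (pow_inj_iff_of_orderOf_eq_zero h).mp hab
  · exact pow_injOn_Iio_orderOf.mono fun a ha => lt_of_le_of_lt ha h

theorem MvPolynomial.le_of_mem_support_of_totalDegree_le {R σ : Type*} [CommSemiring R]
    {f : MvPolynomial σ R} {δ : ℕ} (hf : f.totalDegree ≤ δ) {e : σ →₀ ℕ} (he : e ∈ f.support)
    (i : σ) : e i ≤ δ :=
  ((monomial_le_degreeOf i he).trans (degreeOf_le_totalDegree f i)).trans hf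

section WeightedSubstitution

variable {R σ : Type*} [CommSemiring R] [Fintype σ] (c : σ → R) (w : σ → ℕ)

theorem aeval_C_mul_X_pow_eq_sum (f : MvPolynomial σ R) :
    MvPolynomial.aeval (fun i => C (c i) * (X : R[X]) ^ w i) f =
      ∑ e ∈ f.support, C (f.coeff e * ∏ i, c i ^ e i) * X ^ (∑ i, e i * w i) := by
  conv_lhs => rw [f.as_sum, map_sum]
  refine Finset.sum_congr rfl fun e _ => ?_
  rw [MvPolynomial.aeval_monomial, Finsupp.prod_fintype _ _ (fun _ => pow_zero _)]
  simp only [mul_pow, ← C_pow, Finset.prod_mul_distrib, ← map_prod, ← pow_mul,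
    Finset.prod_pow_eq_pow_sum, algebraMap_eq, C_mul, mul_comm (w _)]
  ring

theorem coeff_aeval_C_mul_X_pow (f : MvPolynomial σ R) (M : ℕ) :
    (MvPolynomial.aeval (fun i => C (c i) * (X : R[X]) ^ w i) f).coeff M =
      ∑ e ∈ f.support with ∑ i, e i * w i = M, f.coeff e * ∏ i, c i ^ e i := by
  rw [aeval_C_mul_X_pow_eq_sum, finsetSum_coeff, Finset.sum_filter]
  simp only [coeff_C_mul_X_pow, eq_comm]

variable {c w} {f : MvPolynomial σ R}

theorem coeff_aeval_C_mul_X_pow_of_injOn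
    (hinj : Set.InjOn (fun e : σ →₀ ℕ => ∑ i, e i * w i) f.support) {e : σ →₀ ℕ}
    (he : e ∈ f.support) :
    (MvPolynomial.aeval (fun i => C (c i) * (X : R[X]) ^ w i) f).coeff (∑ i, e i * w i) =
      f.coeff e * ∏ i, c i ^ e i := by
  rw [coeff_aeval_C_mul_X_pow, Finset.sum_eq_single_of_mem e (by simp [he])]
  intro b hb hne
  exact absurd (hinj (Finset.mem_filter.1 hb).1 he (Finset.mem_filter.1 hb).2) hne

theorem coeff_aeval_C_mul_X_pow_eq_zero {M : ℕ} (hM : ∀ e ∈ f.support, ∑ i, e i * w i ≠ M) :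
    (MvPolynomial.aeval (fun i => C (c i) * (X : R[X]) ^ w i) f).coeff M = 0 := by
  rw [coeff_aeval_C_mul_X_pow, Finset.filter_false_of_mem hM, Finset.sum_empty]

end WeightedSubstitution

theorem aeval_X_pow_eq_aeval_C_one_mul {R σ : Type*} [CommSemiring R] (w : σ → ℕ) :
    MvPolynomial.aeval (R := R) (fun i => (X : R[X]) ^ w i) =
      MvPolynomial.aeval (fun i => C ((1 : σ → R) i) * X ^ w i) := by
  simp

theorem aeval_ite_C_mul_X_pow_eq {R σ : Type*} [CommSemiring R] [DecidableEq σ] (w : σ → ℕ)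
    (a : R) (j : σ) :
    MvPolynomial.aeval (R := R) (fun i => if i = j then C a * (X : R[X]) ^ w i else X ^ w i) =
      MvPolynomial.aeval (fun i => C (if i = j then a else 1) * X ^ w i) := by
  congr; funext i; split_ifs <;> simp

theorem coeff_eq_of_klivansSpielman_eq {R σ : Type*} [CommRing R] [IsDomain R] [Fintype σ]
    [DecidableEq σ] {w : σ → ℕ} {δ : ℕ} {lam : Rˣ} (hlam : orderOf lam = 0 ∨ δ < orderOf lam)
    {f f' : MvPolynomial σ R} (hfdeg : f.totalDegree ≤ δ) (hf'deg : f'.totalDegree ≤ δ)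
    (hinj : Set.InjOn (fun e : σ →₀ ℕ => ∑ i, e i * w i) f.support)
    (hinj' : Set.InjOn (fun e : σ →₀ ℕ => ∑ i, e i * w i) f'.support)
    (h0 : MvPolynomial.aeval (fun i => (X : R[X]) ^ w i) f =
      MvPolynomial.aeval (fun i => (X : R[X]) ^ w i) f')
    (hj : ∀ j : σ,
      MvPolynomial.aeval (fun i => if i = j then C (lam : R) * (X : R[X]) ^ w i else X ^ w i) f =
      MvPolynomial.aeval (fun i => if i = j then C (lam : R) * (X : R[X]) ^ w i else X ^ w i) f')
    {e : σ →₀ ℕ} (he : e ∈ f.support) : f'.coeff e = f.coeff e := by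
  rw [aeval_X_pow_eq_aeval_C_one_mul] at h0
  simp only [aeval_ite_C_mul_X_pow_eq] at hj
  obtain ⟨e', he', hw⟩ : ∃ e' ∈ f'.support, ∑ i, e' i * w i = ∑ i, e i * w i := by
    by_contra! hne
    have := congrArg (coeff · (∑ i, e i * w i)) h0
    rw [coeff_aeval_C_mul_X_pow_of_injOn hinj he, coeff_aeval_C_mul_X_pow_eq_zero hne] at this
    exact MvPolynomial.mem_support_iff.mp he (by simpa using this)
  have key (c : σ → R) (hc : MvPolynomial.aeval (fun i => C (c i) * (X : R[X]) ^ w i) f =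
      MvPolynomial.aeval (fun i => C (c i) * (X : R[X]) ^ w i) f') :
      f'.coeff e' * ∏ i, c i ^ e' i = f.coeff e * ∏ i, c i ^ e i := by
    rw [← coeff_aeval_C_mul_X_pow_of_injOn hinj he, ← coeff_aeval_C_mul_X_pow_of_injOn hinj' he',
      hw, hc]
  have hc : f'.coeff e' = f.coeff e := by simpa using key 1 h0
  suffices e' = e by rwa [this] at hc
  ext j
  have hcj : f'.coeff e' * (lam : R) ^ e' j = f.coeff e * (lam : R) ^ e j := by
    simpa [ite_pow] using key _ (hj j)
  rw [hc] at hcj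
  have hpow : lam ^ e' j = lam ^ e j :=
    Units.ext (by simpa using mul_left_cancel₀ (MvPolynomial.mem_support_iff.mp he) hcj)
  exact pow_injOn_Iic_of_orderOf hlam
    (MvPolynomial.le_of_mem_support_of_totalDegree_le hf'deg he' j)
    (MvPolynomial.le_of_mem_support_of_totalDegree_le hfdeg he j) hpow

theorem stmt18_general (F : Type*) [Field F] (n δ q k : ℕ)
    (lam : Fˣ) (hlam : orderOf lam = 0 ∨ δ < orderOf lam)
    (f f' : MvPolynomial (Fin n) F)
    (hfdeg : f.totalDegree ≤ δ) (hf'deg : f'.totalDegree ≤ δ)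
    (hinj : Set.InjOn (fun e : Fin n →₀ ℕ => ∑ i, e i * (k ^ (i : ℕ) % q)) ↑f.support)
    (hinj' : Set.InjOn (fun e : Fin n →₀ ℕ => ∑ i, e i * (k ^ (i : ℕ) % q)) ↑f'.support)
    (h0 : MvPolynomial.aeval (fun i : Fin n => (X : F[X]) ^ (k ^ (i : ℕ) % q)) f =
          MvPolynomial.aeval (fun i : Fin n => (X : F[X]) ^ (k ^ (i : ℕ) % q)) f')
    (hj : ∀ j : Fin n,
      MvPolynomial.aeval (fun i : Fin n =>
          if i = j then Polynomial.C (lam : F) * (X : F[X]) ^ (k ^ (i : ℕ) % q)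
          else (X : F[X]) ^ (k ^ (i : ℕ) % q)) f =
      MvPolynomial.aeval (fun i : Fin n =>
          if i = j then Polynomial.C (lam : F) * (X : F[X]) ^ (k ^ (i : ℕ) % q)
          else (X : F[X]) ^ (k ^ (i : ℕ) % q)) f') :
    f = f' := by
  ext e
  by_cases he : e ∈ f.support
  · exact (coeff_eq_of_klivansSpielman_eq hlam hfdeg hf'deg hinj hinj' h0 hj he).symm
  by_cases he' : e ∈ f'.support
  · exact coeff_eq_of_klivansSpielman_eq hlam hf'deg hfdeg hinj' hinj h0.symm
      (fun j => (hj j).symm) he'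
  rw [MvPolynomial.notMem_support_iff.mp he, MvPolynomial.notMem_support_iff.mp he']

/-- Recovery from the modified Klivans–Spielman maps: if `λ` has multiplicative order
greater than `δ` (or infinite order), `f` and `f'` have degree at most `δ`, and the
Klivans–Spielman exponent map is injective on their supports, then `f` is uniquely
determined by the `n + 1` univariate images `Ψ_{k,q}(·)` and `Ψ_{j,k,q,λ}(·)`,
`j = 1, …, n`. -/
theorem stmt18 (F : Type*) [Field F] (n δ q k : ℕ) (hq : q.Prime)
    (hk1 : 1 ≤ k) (hk2 : k ≤ q - 1)
    (lam : Fˣ) (hlam : orderOf lam = 0 ∨ δ < orderOf lam)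
    (f f' : MvPolynomial (Fin n) F)
    (hfdeg : f.totalDegree ≤ δ) (hf'deg : f'.totalDegree ≤ δ)
    (hinj : Set.InjOn (fun e : Fin n →₀ ℕ => ∑ i, e i * (k ^ (i : ℕ) % q)) ↑f.support)
    (hinj' : Set.InjOn (fun e : Fin n →₀ ℕ => ∑ i, e i * (k ^ (i : ℕ) % q)) ↑f'.support)
    (h0 : MvPolynomial.aeval (fun i : Fin n => (X : F[X]) ^ (k ^ (i : ℕ) % q)) f =
          MvPolynomial.aeval (fun i : Fin n => (X : F[X]) ^ (k ^ (i : ℕ) % q)) f')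
    (hj : ∀ j : Fin n,
      MvPolynomial.aeval (fun i : Fin n =>
          if i = j then Polynomial.C (lam : F) * (X : F[X]) ^ (k ^ (i : ℕ) % q)
          else (X : F[X]) ^ (k ^ (i : ℕ) % q)) f =
      MvPolynomial.aeval (fun i : Fin n =>
          if i = j then Polynomial.C (lam : F) * (X : F[X]) ^ (k ^ (i : ℕ) % q)
          else (X : F[X]) ^ (k ^ (i : ℕ) % q)) f') :
    f = f' :=
  stmt18_general F n δ q k lam hlam f f' hfdeg hf'deg hinj hinj' h0 hj
end
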